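/- Let n = 2 (two sites), let ρ₁ := ρ_{{1}} (= ρ_{{2}}) be the recombination rate and b ≥ 0 the resampling rate, and fix a reference type x° ∈ X. Define the linkage disequilibrium function D(z) := N · [1,2]_z − [1]_z · [2]_z. Then D is an eigenfunction of the combined recombination–resampling generator: for every z : X → ℕ with ∑_y z(y) = N, ((𝒢 + B)D)(z) = −(ρ₁ + b/N) · D(z). Consequently the expected linkage disequilibrium decays exponentially, E[D(Z_t)] = e^{−(ρ₁ + b/N) t} E[D(Z_0)]: both recombination and resampling reduce correlations between the two sites. -/
import Mathlib


open scoped Classical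

noncomputable section

namespace MoranRecomb

variable {Xa : Fin 2 → Type*}

/-- The recombination map `p_G`. -/
def recMap (G : Finset (Fin 2)) (x y : ∀ i, Xa i) : ∀ i, Xa i :=
  fun i => if i ∈ G then x i else y i

/-- The delta (point) counting measure. -/
def delta {α : Type*} (x : α) : α → ℤ := fun w => if w = x then 1 else 0

/-- The jump vector `v_{G,x,y}` of a recombination event. -/
def jump (G : Finset (Fin 2)) (x y : ∀ i, Xa i) : (∀ i, Xa i) → ℤ :=
  fun w => delta (recMap G x y) w + delta (recMap Gᶜ x y) w - delta x w - delta y w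

/-- The recombination generator `𝒢`. -/
def recGen [∀ i, Fintype (Xa i)] (ρ : Finset (Fin 2) → ℝ) (N : ℝ)
    (f : ((∀ i, Xa i) → ℤ) → ℝ) (z : (∀ i, Xa i) → ℤ) : ℝ :=
  ∑ G : Finset (Fin 2), ∑ x : ∀ i, Xa i, ∑ y : ∀ i, Xa i,
    ρ G / (4 * N) * (z x : ℝ) * (z y : ℝ) * (f (z + jump G x y) - f z)

/-- The resampling generator `B`. -/
def resGen [∀ i, Fintype (Xa i)] (b N : ℝ) (f : ((∀ i, Xa i) → ℤ) → ℝ)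
    (z : (∀ i, Xa i) → ℤ) : ℝ :=
  ∑ x : ∀ i, Xa i, ∑ y : ∀ i, Xa i,
    b / (2 * N) * (z x : ℝ) * (z y : ℝ) * (f (z + delta x - delta y) - f z)

/-- `[A]_z = (π_A.z)(π_A(x°))` of an integer configuration, as a real number. -/
def margRZ [∀ i, Fintype (Xa i)] (A : Finset (Fin 2)) (z : (∀ i, Xa i) → ℤ)
    (u : ∀ i, Xa i) : ℝ :=
  ∑ y : ∀ i, Xa i, if ∀ i ∈ A, y i = u i then (z y : ℝ) else 0

section Aux

variable [∀ i, Fintype (Xa i)]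

lemma margRZ_add (A : Finset (Fin 2)) (u : ∀ i, Xa i) (w v : (∀ i, Xa i) → ℤ) :
    margRZ A (w + v) u = margRZ A w u + margRZ A v u := by
  unfold margRZ
  rw [← Finset.sum_add_distrib]
  refine Finset.sum_congr rfl fun y _ => ?_
  by_cases h : ∀ i ∈ A, y i = u i
  · rw [if_pos h, if_pos h, if_pos h]; simp
  · rw [if_neg h, if_neg h, if_neg h]; ring

lemma margRZ_sub (A : Finset (Fin 2)) (u : ∀ i, Xa i) (w v : (∀ i, Xa i) → ℤ) :
    margRZ A (w - v) u = margRZ A w u - margRZ A v u := by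
  unfold margRZ
  rw [← Finset.sum_sub_distrib]
  refine Finset.sum_congr rfl fun y _ => ?_
  by_cases h : ∀ i ∈ A, y i = u i
  · rw [if_pos h, if_pos h, if_pos h]; simp
  · rw [if_neg h, if_neg h, if_neg h]; ring

lemma margRZ_delta (A : Finset (Fin 2)) (u w : ∀ i, Xa i) :
    margRZ A (delta w) u = if ∀ i ∈ A, w i = u i then 1 else 0 := by
  unfold margRZ
  rw [Finset.sum_eq_single w]
  · simp [delta]
  · intro y _ hy; simp [delta, hy]
  · simp

lemma jump_decomp (G : Finset (Fin 2)) (x y : ∀ i, Xa i) :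
    jump G x y = delta (recMap G x y) + delta (recMap Gᶜ x y) - delta x - delta y := rfl

end Aux

/-- The linkage disequilibrium `D(z) = N [1,2]_z − [1]_z [2]_z` is an eigenfunction of
the combined recombination–resampling generator with eigenvalue `−(ρ₁ + b/N)`:
consequently the expected linkage disequilibrium decays exponentially — both
recombination and resampling reduce correlations between the two sites. -/
theorem linkage_disequilibrium_eigenfunction
    [∀ i, Fintype (Xa i)] [∀ i, Nonempty (Xa i)]
    (ρ : Finset (Fin 2) → ℝ) (ρ1 : ℝ) (hρ0 : 0 ≤ ρ1)
    (h1 : ρ {0} = ρ1) (h2 : ρ {1} = ρ1) (hρe : ρ ∅ = 0) (hρu : ρ Finset.univ = 0)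
    (b : ℝ) (hb : 0 ≤ b) (N : ℝ) (hN : 0 < N) (x0 : ∀ i, Xa i)
    (z : (∀ i, Xa i) → ℕ) (hz : ∑ y : ∀ i, Xa i, (z y : ℝ) = N) :
    recGen ρ N (fun w => N * (w x0 : ℝ) - margRZ {0} w x0 * margRZ {1} w x0)
        (fun y => (z y : ℤ))
      + resGen b N (fun w => N * (w x0 : ℝ) - margRZ {0} w x0 * margRZ {1} w x0)
        (fun y => (z y : ℤ))
      = -(ρ1 + b / N) *
          (N * (z x0 : ℝ)
            - margRZ {0} (fun y => (z y : ℤ)) x0 * margRZ {1} (fun y => (z y : ℤ)) x0) := by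
  classical
  have hN' : N ≠ 0 := ne_of_gt hN
  set f : ((∀ i, Xa i) → ℤ) → ℝ :=
    fun w => N * (w x0 : ℝ) - margRZ {0} w x0 * margRZ {1} w x0 with hf
  set zI : (∀ i, Xa i) → ℤ := fun y => (z y : ℤ) with hzI
  set m1 := margRZ {0} zI x0 with hm1
  set m2 := margRZ {1} zI x0 with hm2
  have funeq : ∀ u v : ∀ i, Xa i, u = v ↔ (u 0 = v 0 ∧ u 1 = v 1) := fun u v => by
    rw [funext_iff, Fin.forall_fin_two]
  have hGc0 : ({0} : Finset (Fin 2))ᶜ = {1} := by decide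
  have hGc1 : ({1} : Finset (Fin 2))ᶜ = {0} := by decide
  have hS : ∑ x : ∀ i, Xa i, (zI x : ℝ) = N := by
    simp only [hzI, Int.cast_natCast]; exact hz
  have e1 : m1 = ∑ x : ∀ i, Xa i, (if x 0 = x0 0 then (zI x : ℝ) else 0) := by
    rw [hm1]; unfold margRZ
    refine Finset.sum_congr rfl fun y _ => ?_
    simp
  have e2 : m2 = ∑ x : ∀ i, Xa i, (if x 1 = x0 1 then (zI x : ℝ) else 0) := by
    rw [hm2]; unfold margRZ
    refine Finset.sum_congr rfl fun y _ => ?_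
    simp
  have e12 : ∑ x : ∀ i, Xa i, (if x = x0 then (zI x : ℝ) else 0) = (zI x0 : ℝ) := by
    simp
  have dprod : ∀ (c : ℝ) (F G : (∀ i, Xa i) → ℝ),
      (∑ x : ∀ i, Xa i, ∑ y : ∀ i, Xa i, c * (F x * G y))
        = c * ((∑ x : ∀ i, Xa i, F x) * (∑ y : ∀ i, Xa i, G y)) := by
    intro c F G
    rw [Finset.sum_mul_sum, Finset.mul_sum]
    exact Finset.sum_congr rfl fun x _ => by rw [Finset.mul_sum]
  have pull : ∀ (c : ℝ) (F : (∀ i, Xa i) → (∀ i, Xa i) → ℝ),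
      (∑ x : ∀ i, Xa i, ∑ y : ∀ i, Xa i, c * F x y)
        = c * ∑ x : ∀ i, Xa i, ∑ y : ∀ i, Xa i, F x y := by
    intro c F
    simp only [← Finset.mul_sum]
  -- recombination: marginals of jump vanish
  have mj0 : ∀ x y : ∀ i, Xa i, margRZ {0} (jump {0} x y) x0 = 0 := by
    intro x y
    rw [jump_decomp]
    simp only [margRZ_sub, margRZ_add, margRZ_delta, hGc0]
    by_cases hx : x 0 = x0 0 <;> by_cases hy : y 0 = x0 0 <;>
      simp [recMap, hx, hy]
  have mj1 : ∀ x y : ∀ i, Xa i, margRZ {1} (jump {0} x y) x0 = 0 := by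
    intro x y
    rw [jump_decomp]
    simp only [margRZ_sub, margRZ_add, margRZ_delta, hGc0]
    by_cases hx : x 1 = x0 1 <;> by_cases hy : y 1 = x0 1 <;>
      simp [recMap, hx, hy]
  have diff0 : ∀ x y : ∀ i, Xa i,
      f (zI + jump {0} x y) - f zI = N * ((jump {0} x y x0 : ℤ) : ℝ) := by
    intro x y
    simp only [hf]
    rw [margRZ_add, margRZ_add, mj0 x y, mj1 x y]
    simp only [Pi.add_apply, Int.cast_add, ← hm1, ← hm2]
    ring
  have term0 : ∀ x y : ∀ i, Xa i,
      (zI x : ℝ) * (zI y : ℝ) * ((jump {0} x y x0 : ℤ) : ℝ)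
        = (1:ℝ) * ((if x 0 = x0 0 then (zI x : ℝ) else 0) * (if y 1 = x0 1 then (zI y : ℝ) else 0))
          + 1 * ((if x 1 = x0 1 then (zI x : ℝ) else 0) * (if y 0 = x0 0 then (zI y : ℝ) else 0))
          - 1 * ((if x = x0 then (zI x : ℝ) else 0) * (zI y : ℝ))
          - 1 * ((zI x : ℝ) * (if y = x0 then (zI y : ℝ) else 0)) := by
    intro x y
    have hr0 : (x0 = recMap {0} x y) ↔ (x 0 = x0 0 ∧ y 1 = x0 1) := by
      rw [funeq]; simp [recMap, eq_comm]
    have hr1 : (x0 = recMap {1} x y) ↔ (y 0 = x0 0 ∧ x 1 = x0 1) := by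
      rw [funeq]; simp [recMap, eq_comm]
    have hsx : (x0 = x) ↔ (x 0 = x0 0 ∧ x 1 = x0 1) := by
      rw [funeq]; exact and_congr eq_comm eq_comm
    have hsy : (x0 = y) ↔ (y 0 = x0 0 ∧ y 1 = x0 1) := by
      rw [funeq]; exact and_congr eq_comm eq_comm
    rw [jump_decomp, hGc0]
    simp only [Pi.sub_apply, Pi.add_apply, Int.cast_sub, Int.cast_add, delta]
    by_cases a1 : x 0 = x0 0 <;> by_cases a2 : x 1 = x0 1 <;>
      by_cases b1 : y 0 = x0 0 <;> by_cases b2 : y 1 = x0 1 <;>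
      simp [hr0, hr1, hsx, hsy, funeq, a1, a2, b1, b2] <;> ring
  have sum0 : (∑ x : ∀ i, Xa i, ∑ y : ∀ i, Xa i,
        (zI x : ℝ) * (zI y : ℝ) * ((jump {0} x y x0 : ℤ) : ℝ))
      = 2 * (m1 * m2 - N * (zI x0 : ℝ)) := by
    calc (∑ x : ∀ i, Xa i, ∑ y : ∀ i, Xa i,
            (zI x : ℝ) * (zI y : ℝ) * ((jump {0} x y x0 : ℤ) : ℝ))
        = ∑ x : ∀ i, Xa i, ∑ y : ∀ i, Xa i,
            ((1:ℝ) * ((if x 0 = x0 0 then (zI x : ℝ) else 0) * (if y 1 = x0 1 then (zI y : ℝ) else 0))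
              + 1 * ((if x 1 = x0 1 then (zI x : ℝ) else 0) * (if y 0 = x0 0 then (zI y : ℝ) else 0))
              - 1 * ((if x = x0 then (zI x : ℝ) else 0) * (zI y : ℝ))
              - 1 * ((zI x : ℝ) * (if y = x0 then (zI y : ℝ) else 0))) :=
          Finset.sum_congr rfl fun x _ => Finset.sum_congr rfl fun y _ => term0 x y
      _ = 2 * (m1 * m2 - N * (zI x0 : ℝ)) := by
          simp only [Finset.sum_add_distrib, Finset.sum_sub_distrib, dprod]
          rw [hS, e12, ← e1, ← e2]
          ring
  have S0 : (∑ x : ∀ i, Xa i, ∑ y : ∀ i, Xa i,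
        ρ1 / (4 * N) * (zI x : ℝ) * (zI y : ℝ) * (f (zI + jump {0} x y) - f zI))
      = (ρ1 / 2) * (m1 * m2 - N * (zI x0 : ℝ)) := by
    calc (∑ x : ∀ i, Xa i, ∑ y : ∀ i, Xa i,
            ρ1 / (4 * N) * (zI x : ℝ) * (zI y : ℝ) * (f (zI + jump {0} x y) - f zI))
        = ∑ x : ∀ i, Xa i, ∑ y : ∀ i, Xa i,
            (ρ1 / (4 * N) * N) * ((zI x : ℝ) * (zI y : ℝ) * ((jump {0} x y x0 : ℤ) : ℝ)) :=
          Finset.sum_congr rfl fun x _ => Finset.sum_congr rfl fun y _ => by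
            rw [diff0 x y]; ring
      _ = (ρ1 / (4 * N) * N) * ∑ x : ∀ i, Xa i, ∑ y : ∀ i, Xa i,
            ((zI x : ℝ) * (zI y : ℝ) * ((jump {0} x y x0 : ℤ) : ℝ)) := pull _ _
      _ = (ρ1 / (4 * N) * N) * (2 * (m1 * m2 - N * (zI x0 : ℝ))) := by rw [sum0]
      _ = (ρ1 / 2) * (m1 * m2 - N * (zI x0 : ℝ)) := by field_simp; ring
  have jump_symm : ∀ x y : ∀ i, Xa i, jump {1} x y = jump {0} x y := by
    intro x y
    funext w
    simp only [jump, hGc0, hGc1]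
    ring
  have hrec : recGen ρ N f zI = -ρ1 * (N * (zI x0 : ℝ) - m1 * m2) := by
    unfold recGen
    rw [show (Finset.univ : Finset (Finset (Fin 2))) = {∅, {0}, {1}, Finset.univ} from by decide]
    rw [Finset.sum_insert (by decide), Finset.sum_insert (by decide),
      Finset.sum_insert (by decide), Finset.sum_singleton]
    rw [hρe, hρu, h1, h2]
    simp only [zero_div, zero_mul, Finset.sum_const_zero, zero_add, add_zero]
    simp only [jump_symm]
    rw [S0]
    ring
  -- resampling part
  have termB : ∀ x y : ∀ i, Xa i,
      (zI x : ℝ) * (zI y : ℝ) * (f (zI + delta x - delta y) - f zI)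
        = N * ((if x = x0 then (zI x : ℝ) else 0) * (zI y : ℝ))
          - N * ((zI x : ℝ) * (if y = x0 then (zI y : ℝ) else 0))
          - m1 * ((if x 1 = x0 1 then (zI x : ℝ) else 0) * (zI y : ℝ))
          + m1 * ((zI x : ℝ) * (if y 1 = x0 1 then (zI y : ℝ) else 0))
          - m2 * ((if x 0 = x0 0 then (zI x : ℝ) else 0) * (zI y : ℝ))
          + m2 * ((zI x : ℝ) * (if y 0 = x0 0 then (zI y : ℝ) else 0))
          - (1:ℝ) * ((if x = x0 then (zI x : ℝ) else 0) * (zI y : ℝ))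
          - (1:ℝ) * ((zI x : ℝ) * (if y = x0 then (zI y : ℝ) else 0))
          + (1:ℝ) * ((if x 0 = x0 0 then (zI x : ℝ) else 0) * (if y 1 = x0 1 then (zI y : ℝ) else 0))
          + (1:ℝ) * ((if x 1 = x0 1 then (zI x : ℝ) else 0) * (if y 0 = x0 0 then (zI y : ℝ) else 0)) := by
    intro x y
    have hsx : (x0 = x) ↔ (x 0 = x0 0 ∧ x 1 = x0 1) := by
      rw [funeq]; exact and_congr eq_comm eq_comm
    have hsy : (x0 = y) ↔ (y 0 = x0 0 ∧ y 1 = x0 1) := by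
      rw [funeq]; exact and_congr eq_comm eq_comm
    simp only [hf]
    simp only [margRZ_sub, margRZ_add, margRZ_delta, ← hm1, ← hm2]
    simp only [Pi.sub_apply, Pi.add_apply, Int.cast_sub, Int.cast_add]
    by_cases a1 : x 0 = x0 0 <;> by_cases a2 : x 1 = x0 1 <;>
      by_cases b1 : y 0 = x0 0 <;> by_cases b2 : y 1 = x0 1 <;>
      simp [delta, hsx, hsy, funeq, a1, a2, b1, b2] <;> ring
  have sumB : (∑ x : ∀ i, Xa i, ∑ y : ∀ i, Xa i,
        (zI x : ℝ) * (zI y : ℝ) * (f (zI + delta x - delta y) - f zI))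
      = 2 * (m1 * m2 - N * (zI x0 : ℝ)) := by
    calc (∑ x : ∀ i, Xa i, ∑ y : ∀ i, Xa i,
            (zI x : ℝ) * (zI y : ℝ) * (f (zI + delta x - delta y) - f zI))
        = ∑ x : ∀ i, Xa i, ∑ y : ∀ i, Xa i,
            (N * ((if x = x0 then (zI x : ℝ) else 0) * (zI y : ℝ))
            - N * ((zI x : ℝ) * (if y = x0 then (zI y : ℝ) else 0))
            - m1 * ((if x 1 = x0 1 then (zI x : ℝ) else 0) * (zI y : ℝ))
            + m1 * ((zI x : ℝ) * (if y 1 = x0 1 then (zI y : ℝ) else 0))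
            - m2 * ((if x 0 = x0 0 then (zI x : ℝ) else 0) * (zI y : ℝ))
            + m2 * ((zI x : ℝ) * (if y 0 = x0 0 then (zI y : ℝ) else 0))
            - (1:ℝ) * ((if x = x0 then (zI x : ℝ) else 0) * (zI y : ℝ))
            - (1:ℝ) * ((zI x : ℝ) * (if y = x0 then (zI y : ℝ) else 0))
            + (1:ℝ) * ((if x 0 = x0 0 then (zI x : ℝ) else 0) * (if y 1 = x0 1 then (zI y : ℝ) else 0))
            + (1:ℝ) * ((if x 1 = x0 1 then (zI x : ℝ) else 0) * (if y 0 = x0 0 then (zI y : ℝ) else 0))) :=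
          Finset.sum_congr rfl fun x _ => Finset.sum_congr rfl fun y _ => termB x y
      _ = 2 * (m1 * m2 - N * (zI x0 : ℝ)) := by
          simp only [Finset.sum_add_distrib, Finset.sum_sub_distrib, dprod]
          rw [hS, e12, ← e1, ← e2]
          ring
  have hres : resGen b N f zI = -(b / N) * (N * (zI x0 : ℝ) - m1 * m2) := by
    unfold resGen
    calc (∑ x : ∀ i, Xa i, ∑ y : ∀ i, Xa i,
            b / (2 * N) * (zI x : ℝ) * (zI y : ℝ) * (f (zI + delta x - delta y) - f zI))
        = ∑ x : ∀ i, Xa i, ∑ y : ∀ i, Xa i,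
            b / (2 * N) * ((zI x : ℝ) * (zI y : ℝ) * (f (zI + delta x - delta y) - f zI)) :=
          Finset.sum_congr rfl fun x _ => Finset.sum_congr rfl fun y _ => by ring
      _ = b / (2 * N) * ∑ x : ∀ i, Xa i, ∑ y : ∀ i, Xa i,
            ((zI x : ℝ) * (zI y : ℝ) * (f (zI + delta x - delta y) - f zI)) := pull _ _
      _ = b / (2 * N) * (2 * (m1 * m2 - N * (zI x0 : ℝ))) := by rw [sumB]
      _ = -(b / N) * (N * (zI x0 : ℝ) - m1 * m2) := by field_simp; ring
  rw [hrec, hres]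
  have hx : ((zI x0 : ℤ) : ℝ) = (z x0 : ℝ) := by simp [hzI]
  rw [hx]
  ring

end MoranRecomb
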